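/- arXiv:2007.02703 — 5 statements merged into one kernel-verified Lean document; each statement's English description precedes it below -/
import Mathlib

section
/- Let M₁ ∈ ℝ^{n×n} and M₂ ∈ ℝ^{k×k} be symmetric positive semidefinite and let F ∈ ℝ^{n×k}. Then for every x₁ ∈ E(0, M₁) ⊆ ℝ^n and every x₂ ∈ E(0, M₂) ⊆ ℝ^k, it holds that x₁ᵀ F x₂ ≤ √(λ_max(F M₂ Fᵀ M₁)), where all eigenvalues of F M₂ Fᵀ M₁ are real and nonnegative, and λ_max denotes the largest one. -/
/-!
Put `G = F M₂ Fᵀ ⪰ 0`. The support-function inequality of `x₂` at `l = Fᵀ x₁` gives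
`x₁ᵀ F x₂ ≤ √(x₁ᵀ G x₁)`. Factor `G = Bᵀ B`: then `G M₁ = Bᵀ (B M₁)` has the characteristic
polynomial of the positive semidefinite matrix `B M₁ Bᵀ`, so its eigenvalues are real and
nonnegative, and `λ = λ_max(G M₁)` bounds the Rayleigh quotient of `B M₁ Bᵀ`. The
support-function inequality of `x₁` at `l = G x₁` then reads `q ≤ √(λ q)` for
`q = x₁ᵀ G x₁ = |B x₁|²`, hence `q ≤ λ`.
-/

open Matrix

/-- Membership in the ellipsoid `E(m, M)` defined via its support function. -/
def inEllipsoid {n : ℕ} (m : Fin n → ℝ) (M : Matrix (Fin n) (Fin n) ℝ)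
    (x : Fin n → ℝ) : Prop :=
  ∀ l : Fin n → ℝ, l ⬝ᵥ x ≤ l ⬝ᵥ m + Real.sqrt (l ⬝ᵥ (M *ᵥ l))

/-- The set of (complex) eigenvalues of a real square matrix, i.e. its spectrum over `ℂ`. -/
def cEigs {d : ℕ} (A : Matrix (Fin d) (Fin d) ℝ) : Set ℂ :=
  spectrum ℂ (A.map (algebraMap ℝ ℂ))

/-- The maximum-in-real-part eigenvalue of a real square matrix. -/
noncomputable def lmax {d : ℕ} (A : Matrix (Fin d) (Fin d) ℝ) : ℝ :=
  sSup (Complex.re '' cEigs A)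

open scoped MatrixOrder ComplexOrder in
lemma Matrix.PosSemidef.exists_eq_conjTranspose_mul_self {m 𝕜 : Type*} [Fintype m]
    [DecidableEq m] [RCLike 𝕜] {A : Matrix m m 𝕜} (hA : A.PosSemidef) :
    ∃ B : Matrix m m 𝕜, A = Bᴴ * B :=
  ⟨CFC.sqrt A, by
    rw [← Matrix.star_eq_conjTranspose, (CFC.sqrt_nonneg A).isSelfAdjoint.star_eq,
      CFC.sqrt_mul_sqrt_self A hA.nonneg]⟩

open scoped MatrixOrder in
lemma Matrix.IsHermitian.dotProduct_mulVec_le {m : Type*} [Fintype m] [DecidableEq m]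
    {A : Matrix m m ℝ} (hA : A.IsHermitian) {c : ℝ} (hc : ∀ t ∈ spectrum ℝ A, t ≤ c)
    (v : m → ℝ) : v ⬝ᵥ (A *ᵥ v) ≤ c * (v ⬝ᵥ v) := by
  have h : 0 ≤ algebraMap ℝ _ c - A :=
    sub_nonneg.2 ((le_algebraMap_iff_spectrum_le hA.isSelfAdjoint).2 hc)
  have := (Matrix.nonneg_iff_posSemidef.1 h).dotProduct_mulVec_nonneg v
  simpa [Matrix.sub_mulVec, Algebra.algebraMap_eq_smul_one, Matrix.smul_mulVec,
    dotProduct_sub] using this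

section ComplexEigenvalues

variable {d : ℕ}

lemma mem_cEigs_iff (A : Matrix (Fin d) (Fin d) ℝ) (z : ℂ) :
    z ∈ cEigs A ↔ (A.charpoly.map (algebraMap ℝ ℂ)).IsRoot z := by
  rw [cEigs, Matrix.mem_spectrum_iff_isRoot_charpoly, Matrix.charpoly_map]

lemma cEigs_mul_comm (A B : Matrix (Fin d) (Fin d) ℝ) :
    cEigs (A * B) = cEigs (B * A) := by
  ext z
  rw [mem_cEigs_iff, mem_cEigs_iff, Matrix.charpoly_mul_comm]

lemma lmax_mul_comm (A B : Matrix (Fin d) (Fin d) ℝ) :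
    lmax (A * B) = lmax (B * A) := by
  rw [lmax, lmax, cEigs_mul_comm]

lemma Matrix.IsHermitian.cEigs_eq {A : Matrix (Fin d) (Fin d) ℝ} (hA : A.IsHermitian) :
    cEigs A = Set.range fun i ↦ (hA.eigenvalues i : ℂ) := by
  ext z
  simp [mem_cEigs_iff, hA.charpoly_eq, Finset.prod_eq_zero_iff, sub_eq_zero,
    eq_comm (a := z)]

lemma le_lmax_of_mem_spectrum {A : Matrix (Fin d) (Fin d) ℝ} {t : ℝ}
    (ht : t ∈ spectrum ℝ A) : t ≤ lmax A := by
  have hfin : (cEigs A).Finite := by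
    rw [show cEigs A = _ from Set.ext (mem_cEigs_iff A)]
    exact Polynomial.finite_setOfPred_isRoot (A.charpoly_monic.map _).ne_zero
  refine le_csSup (hfin.image _).bddAbove ⟨t, ?_, Complex.ofReal_re t⟩
  rw [mem_cEigs_iff]
  exact ((Matrix.mem_spectrum_iff_isRoot_charpoly).1 ht).map

lemma Matrix.PosSemidef.cEigs_nonneg {A : Matrix (Fin d) (Fin d) ℝ} (hA : A.PosSemidef) :
    ∀ z ∈ cEigs A, z.im = 0 ∧ 0 ≤ z.re := by
  rw [hA.isHermitian.cEigs_eq]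
  rintro _ ⟨i, rfl⟩
  exact ⟨Complex.ofReal_im _, hA.eigenvalues_nonneg i⟩

variable {G M : Matrix (Fin d) (Fin d) ℝ}

lemma Matrix.PosSemidef.cEigs_mul_nonneg (hG : G.PosSemidef) (hM : M.PosSemidef) :
    ∀ z ∈ cEigs (G * M), z.im = 0 ∧ 0 ≤ z.re := by
  obtain ⟨B, rfl⟩ := hG.exists_eq_conjTranspose_mul_self
  rw [Matrix.mul_assoc, cEigs_mul_comm]
  exact (hM.mul_mul_conjTranspose_same B).cEigs_nonneg

lemma Matrix.PosSemidef.lmax_mul_nonneg (hG : G.PosSemidef) (hM : M.PosSemidef) :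
    0 ≤ lmax (G * M) :=
  Real.sSup_nonneg <| by
    rintro _ ⟨z, hz, rfl⟩
    exact (hG.cEigs_mul_nonneg hM z hz).2

lemma Matrix.PosSemidef.dotProduct_mulVec_le_lmax_mul (hG : G.PosSemidef) (hM : M.PosSemidef)
    {x : Fin d → ℝ} (hx : inEllipsoid 0 M x) : x ⬝ᵥ (G *ᵥ x) ≤ lmax (G * M) := by
  have hc := hG.lmax_mul_nonneg hM
  obtain ⟨B, rfl⟩ := hG.exists_eq_conjTranspose_mul_self
  have hlmax : lmax (Bᴴ * B * M) = lmax (B * M * Bᴴ) := by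
    rw [Matrix.mul_assoc, lmax_mul_comm]
  rw [Matrix.conjTranspose_eq_transpose_of_trivial] at hc hlmax ⊢
  set y := B *ᵥ x
  have hy : 0 ≤ y ⬝ᵥ y := by simpa using dotProduct_self_star_nonneg y
  have hq : x ⬝ᵥ ((Bᵀ * B) *ᵥ x) = y ⬝ᵥ y := by
    rw [← Matrix.mulVec_mulVec, Matrix.dotProduct_mulVec, Matrix.vecMul_transpose,
      dotProduct_comm]
  have hquad : ((Bᵀ * B) *ᵥ x) ⬝ᵥ (M *ᵥ ((Bᵀ * B) *ᵥ x)) = y ⬝ᵥ ((B * M * Bᵀ) *ᵥ y) := by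
    simp only [← Matrix.mulVec_mulVec]
    rw [Matrix.dotProduct_mulVec y B, ← Matrix.mulVec_transpose]
  have hrayleigh : y ⬝ᵥ ((B * M * Bᵀ) *ᵥ y) ≤ lmax (Bᵀ * B * M) * (y ⬝ᵥ y) := by
    refine Matrix.IsHermitian.dotProduct_mulVec_le ?_
      (fun t ht ↦ hlmax ▸ le_lmax_of_mem_spectrum ht) y
    simpa using (hM.mul_mul_conjTranspose_same B).isHermitian
  have hsupp : y ⬝ᵥ y ≤ √(lmax (Bᵀ * B * M) * (y ⬝ᵥ y)) := by
    have := hx ((Bᵀ * B) *ᵥ x)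
    rw [dotProduct_zero, zero_add, dotProduct_comm, hq, hquad] at this
    exact this.trans (Real.sqrt_le_sqrt hrayleigh)
  rw [Real.le_sqrt hy (mul_nonneg hc hy)] at hsupp
  rw [hq]
  nlinarith

end ComplexEigenvalues

/-- Eq. (x1Fx2) of Lemma 3: for `M₁ ⪰ 0` (n×n), `M₂ ⪰ 0` (k×k), `F` (n×k), all eigenvalues
of `F M₂ Fᵀ M₁` are real and nonnegative, and `x₁ᵀ F x₂ ≤ √(λ_max(F M₂ Fᵀ M₁))`
for all `x₁ ∈ E(0, M₁)`, `x₂ ∈ E(0, M₂)`. -/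
theorem x1Fx2_bound {n k : ℕ} (M₁ : Matrix (Fin n) (Fin n) ℝ)
    (M₂ : Matrix (Fin k) (Fin k) ℝ) (F : Matrix (Fin n) (Fin k) ℝ)
    (hM₁ : M₁.PosSemidef) (hM₂ : M₂.PosSemidef) :
    (∀ z ∈ cEigs (F * M₂ * Fᵀ * M₁), z.im = 0 ∧ 0 ≤ z.re) ∧
      ∀ x₁ x₂ : _, inEllipsoid 0 M₁ x₁ → inEllipsoid 0 M₂ x₂ →
        x₁ ⬝ᵥ (F *ᵥ x₂) ≤ Real.sqrt (lmax (F * M₂ * Fᵀ * M₁)) := by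
  have hG : (F * M₂ * Fᵀ).PosSemidef := by
    simpa using hM₂.mul_mul_conjTranspose_same F
  refine ⟨hG.cEigs_mul_nonneg hM₁, fun x₁ x₂ hx₁ hx₂ ↦ ?_⟩
  calc x₁ ⬝ᵥ (F *ᵥ x₂) = (Fᵀ *ᵥ x₁) ⬝ᵥ x₂ := by
        rw [Matrix.dotProduct_mulVec, Matrix.mulVec_transpose]
    _ ≤ √((Fᵀ *ᵥ x₁) ⬝ᵥ (M₂ *ᵥ (Fᵀ *ᵥ x₁))) := by
        simpa using hx₂ (Fᵀ *ᵥ x₁)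
    _ = √(x₁ ⬝ᵥ ((F * M₂ * Fᵀ) *ᵥ x₁)) := by
        rw [Matrix.mulVec_transpose, ← Matrix.dotProduct_mulVec, ← Matrix.mulVec_mulVec,
          ← Matrix.mulVec_mulVec, Matrix.mulVec_transpose]
    _ ≤ √(lmax (F * M₂ * Fᵀ * M₁)) :=
        Real.sqrt_le_sqrt (hG.dotProduct_mulVec_le_lmax_mul hM₁ hx₁)
end

section
/- Let q ∈ ℕ, and for i ∈ {1,…,q} let C_i ∈ ℝ^{m×n}, y_i ∈ ℝ^m, M_i ∈ ℝ^{m×m} symmetric positive definite, and μ_i > 0 with μ_1 + ⋯ + μ_q = 1. Let ȳ ∈ ℝ^{qm} be the vertical stacking of the y_i, let C̄ ∈ ℝ^{qm×n} be the vertical stacking of the C_i, and let M̄ ∈ ℝ^{qm×qm} be the block-diagonal matrix whose i-th diagonal block is (1/μ_i)·M_i. Then every x ∈ ℝ^n satisfying (C_i x − y_i)ᵀ M_i⁻¹ (C_i x − y_i) ≤ 1 for all i ∈ {1,…,q} satisfies (C̄ x − ȳ)ᵀ M̄⁻¹ (C̄ x − ȳ) ≤ 1. -/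
/-! The matrix `M̄` is block diagonal, so `M̄⁻¹` is block diagonal with blocks `μ_i M_i⁻¹`, and the
quadratic form of a block-diagonal matrix is the sum of the quadratic forms of its blocks. Hence
`(C̄x − ȳ)ᵀ M̄⁻¹ (C̄x − ȳ) = ∑ μ_i (C_i x − y_i)ᵀ M_i⁻¹ (C_i x − y_i)`, a convex combination of
numbers at most `1`. -/

open Matrix

namespace Matrix

variable {m o α : Type*} [Fintype m] [Fintype o] [DecidableEq o]

theorem inv_blockDiagonal [DecidableEq m] [CommRing α] {A : o → Matrix m m α}
    (hA : ∀ k, IsUnit (A k).det) :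
    (blockDiagonal A)⁻¹ = blockDiagonal fun k => (A k)⁻¹ := by
  refine inv_eq_right_inv ?_
  rw [← blockDiagonal_mul]
  simp only [mul_nonsing_inv _ (hA _)]
  exact blockDiagonal_one

theorem inv_smul_of_ne_zero [DecidableEq m] [Field α] {A : Matrix m m α} {c : α} (hc : c ≠ 0)
    (hA : IsUnit A.det) :
    (c • A)⁻¹ = c⁻¹ • A⁻¹ :=
  inv_eq_left_inv (by simp [nonsing_inv_mul _ hA, hc, smul_smul])

theorem dotProduct_blockDiagonal_mulVec [NonUnitalNonAssocSemiring α] (A : o → Matrix m m α)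
    (v : m × o → α) :
    v ⬝ᵥ (blockDiagonal A *ᵥ v) = ∑ k, (fun i => v (i, k)) ⬝ᵥ (A k *ᵥ fun i => v (i, k)) := by
  simp only [dotProduct, mulVec, blockDiagonal_apply, Fintype.sum_prod_type, ite_mul, zero_mul,
    Finset.sum_ite_eq, Finset.mem_univ, if_true]
  rw [Finset.sum_comm]

theorem dotProduct_submatrix_equiv_mulVec {n : Type*} [Fintype n] [NonUnitalNonAssocSemiring α]
    (A : Matrix m m α) (e : n ≃ m) (v : n → α) :
    v ⬝ᵥ (A.submatrix e e *ᵥ v) = (v ∘ e.symm) ⬝ᵥ (A *ᵥ (v ∘ e.symm)) := by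
  rw [submatrix_mulVec_equiv, comp_equiv_symm_dotProduct]

end Matrix

/-- The intermediate containment in the proof of Lemma 5 of the paper: any point in the
intersection of the elliptical cylinders `C(y_i, M_i, C_i)` satisfies the combined
stacked ellipsoidal inequality `(C̄x − ȳ)ᵀ M̄⁻¹ (C̄x − ȳ) ≤ 1`, where `M̄` is block
diagonal with blocks `(1/μ_i)·M_i` and `Σ μ_i = 1`. -/
theorem stacked_cylinder_containment {q m n : ℕ}
    (C : Fin q → Matrix (Fin m) (Fin n) ℝ)
    (y : Fin q → Fin m → ℝ)
    (M : Fin q → Matrix (Fin m) (Fin m) ℝ)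
    (hM : ∀ i, (M i).PosDef)
    (μ : Fin q → ℝ) (hμpos : ∀ i, 0 < μ i) (hμsum : ∑ i, μ i = 1)
    (Cbar : Matrix (Fin q × Fin m) (Fin n) ℝ)
    (hCbar : ∀ i j k, Cbar (i, j) k = C i j k)
    (ybar : Fin q × Fin m → ℝ)
    (hybar : ∀ i j, ybar (i, j) = y i j)
    (Mbar : Matrix (Fin q × Fin m) (Fin q × Fin m) ℝ)
    (hMbar : ∀ i j i' j', Mbar (i, j) (i', j') =
      if i = i' then (1 / μ i) * M i j j' else 0)
    (x : Fin n → ℝ)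
    (hx : ∀ i, (C i *ᵥ x - y i) ⬝ᵥ ((M i)⁻¹ *ᵥ (C i *ᵥ x - y i)) ≤ 1) :
    (Cbar *ᵥ x - ybar) ⬝ᵥ (Mbar⁻¹ *ᵥ (Cbar *ᵥ x - ybar)) ≤ 1 := by
  -- `blockDiagonal` puts the block index second, hence the swap of the two coordinates.
  set e := Equiv.prodComm (Fin q) (Fin m)
  have hMbar_block : Mbar = (blockDiagonal fun i => (μ i)⁻¹ • M i).submatrix e e := by
    ext ⟨i, j⟩ ⟨i', j'⟩
    simp [hMbar, e, blockDiagonal_apply]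
  have hstack : Cbar *ᵥ x - ybar = fun p => (C p.1 *ᵥ x - y p.1) p.2 := by
    ext ⟨i, j⟩
    simp [mulVec, dotProduct, hCbar, hybar]
  have hdet i : (M i).det ≠ 0 := (hM i).det_pos.ne'
  have hblock_inv : (blockDiagonal fun i => (μ i)⁻¹ • M i)⁻¹ =
      blockDiagonal fun i => μ i • (M i)⁻¹ := by
    rw [inv_blockDiagonal fun i => by simp [hdet, (hμpos i).ne']]
    simp_rw [inv_smul_of_ne_zero (inv_ne_zero (hμpos _).ne') (hdet _).isUnit, inv_inv]
  rw [hMbar_block, inv_submatrix_equiv, hblock_inv, dotProduct_submatrix_equiv_mulVec,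
    dotProduct_blockDiagonal_mulVec, hstack, ← hμsum]
  refine Finset.sum_le_sum fun i _ => ?_
  change (C i *ᵥ x - y i) ⬝ᵥ ((μ i • (M i)⁻¹) *ᵥ (C i *ᵥ x - y i)) ≤ μ i
  rw [smul_mulVec, dotProduct_smul, smul_eq_mul]
  exact mul_le_of_le_one_right (hμpos i).le (hx i)
end

section
/- Let q ∈ ℕ, and for i ∈ {1,…,q} let C_i ∈ ℝ^{m×n}, y_i ∈ ℝ^m, M_i ∈ ℝ^{m×m} symmetric positive definite, and μ_i > 0 with μ_1 + ⋯ + μ_q = 1. Let ȳ ∈ ℝ^{qm} be the vertical stacking of the y_i, let C̄ ∈ ℝ^{qm×n} be the vertical stacking of the C_i, and let M̄ ∈ ℝ^{qm×qm} be the block-diagonal matrix whose i-th diagonal block is (1/μ_i)·M_i. Assume rank(C̄) = n, and let C̄† := (C̄ᵀC̄)⁻¹C̄ᵀ be the Moore–Penrose pseudoinverse of C̄ (which has this formula since C̄ has full column rank). Then the intersection ∩_{i=1}^{q} C(y_i, M_i, C_i) of the elliptical cylinders is contained in the ellipsoid E(C̄†ȳ, C̄†M̄C̄†ᵀ), i.e.,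 every x with (C_i x − y_i)ᵀ M_i⁻¹ (C_i x − y_i) ≤ 1 for all i satisfies (x − C̄†ȳ)ᵀ (C̄†M̄C̄†ᵀ)⁻¹ (x − C̄†ȳ) ≤ 1. -/
/-!
Put `r = C̄x - ȳ`. Since `C̄†C̄ = 1`, the point `x - C̄†ȳ` equals `C̄†r`. Write `r = M̄u`
(blockwise `u_i = μ_i M_i⁻¹ r_i`). The form `(C̄†M̄u)ᵀ(C̄†M̄C̄†ᵀ)⁻¹(C̄†M̄u)` is the squared
`M̄`-norm of the `M̄`-orthogonal projection of `u` onto the range of `C̄†ᵀ`, so it is at most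
`uᵀM̄u = Σ μ_i r_iᵀM_i⁻¹r_i ≤ Σ μ_i = 1`.
-/

namespace Matrix

theorem mulVec_injective_of_rank_eq_card {m n R : Type*} [Fintype n] [Field R]
    (A : Matrix m n R) (h : A.rank = Fintype.card n) : Function.Injective A.mulVec := by
  have hker : Module.finrank R (LinearMap.ker A.mulVecLin) = 0 := by
    have := LinearMap.finrank_range_add_finrank_ker A.mulVecLin
    rw [← rank, h, Module.finrank_fintype_fun_eq_card] at this
    omega
  rw [Submodule.finrank_eq_zero, LinearMap.ker_eq_bot] at hker
  exact hker

theorem inv_transpose_mul_self_mul_transpose_mul_self {m n : Type*} [Fintype m] [Fintype n]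
    [DecidableEq n] {A : Matrix m n ℝ} (hA : Function.Injective A.mulVec) :
    (Aᵀ * A)⁻¹ * Aᵀ * A = 1 := by
  have hAA : (Aᵀ * A).PosDef := by simpa using PosDef.conjTranspose_mul_self A hA
  rw [Matrix.mul_assoc, nonsing_inv_mul _ ((isUnit_iff_isUnit_det _).mp hAA.isUnit)]

theorem PosDef.mul_mul_transpose_of_mul_eq_one {m n : Type*} [Fintype m] [Fintype n]
    [DecidableEq m] {S : Matrix n n ℝ} (hS : S.PosDef) {B : Matrix m n ℝ} {A : Matrix n m ℝ}
    (hBA : B * A = 1) :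
    (B * S * Bᵀ).PosDef := by
  have hB : Function.Injective B.vecMul :=
    Function.LeftInverse.injective (g := (· ᵥ* A)) fun v => by
      simp only [vecMul_vecMul, hBA, vecMul_one]
  simpa using hS.mul_mul_conjTranspose_same hB

/-- `s = Bᵀ (B S Bᵀ)⁻¹ B S u` is the `S`-orthogonal projection of `u` onto the range of `Bᵀ`,
and the claim is `(u - s)ᵀ S (u - s) ≥ 0` expanded. -/
theorem dotProduct_inv_mul_mul_transpose_mulVec_le {k n : Type*} [Fintype k] [Fintype n]
    [DecidableEq n] {S : Matrix k k ℝ} (hS : S.PosSemidef) (B : Matrix n k ℝ)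
    (hP : IsUnit (B * S * Bᵀ).det) (u : k → ℝ) :
    (B *ᵥ (S *ᵥ u)) ⬝ᵥ ((B * S * Bᵀ)⁻¹ *ᵥ (B *ᵥ (S *ᵥ u))) ≤ u ⬝ᵥ (S *ᵥ u) := by
  set w := (B * S * Bᵀ)⁻¹ *ᵥ (B *ᵥ (S *ᵥ u))
  set s := Bᵀ *ᵥ w
  have hSsymm : Sᵀ = S := by simpa using hS.isHermitian.eq
  have hPw : B *ᵥ (S *ᵥ s) = B *ᵥ (S *ᵥ u) := by
    simp only [s, w, mulVec_mulVec, ← Matrix.mul_assoc]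
    rw [mul_nonsing_inv _ hP, Matrix.one_mul]
  have hsu : s ⬝ᵥ (S *ᵥ u) = (B *ᵥ (S *ᵥ u)) ⬝ᵥ w := by
    rw [dotProduct_comm, dotProduct_transpose_mulVec, dotProduct_comm]
  have hus : u ⬝ᵥ (S *ᵥ s) = s ⬝ᵥ (S *ᵥ u) := by
    rw [dotProduct_comm, dotProduct_mulVec, ← mulVec_transpose, hSsymm]
  have hss : s ⬝ᵥ (S *ᵥ s) = s ⬝ᵥ (S *ᵥ u) := by
    rw [dotProduct_comm, dotProduct_transpose_mulVec, hPw, ← dotProduct_transpose_mulVec,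
      dotProduct_comm]
  have hsq := hS.dotProduct_mulVec_nonneg (u - s)
  rw [star_trivial, mulVec_sub, dotProduct_sub, sub_dotProduct, sub_dotProduct, hus, hss] at hsq
  linarith

variable {ι κ R : Type*} [Fintype ι] [Fintype κ]

theorem dotProduct_prod_eq_sum [NonUnitalNonAssocSemiring R] (v w : ι × κ → R) :
    v ⬝ᵥ w = ∑ i, (fun j => v (i, j)) ⬝ᵥ (fun j => w (i, j)) := by
  simp only [dotProduct, Fintype.sum_prod_type]

/-- Unlike in `Matrix.blockDiagonal`, the block index is the first coordinate. -/
def HasDiagonalBlocks [Zero R] [DecidableEq ι] (N : Matrix (ι × κ) (ι × κ) R)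
    (A : ι → Matrix κ κ R) : Prop :=
  ∀ i j i' j', N (i, j) (i', j') = if i = i' then A i j j' else 0

namespace HasDiagonalBlocks

variable [DecidableEq ι] {N : Matrix (ι × κ) (ι × κ) R} {A : ι → Matrix κ κ R}

theorem mulVec_apply [NonUnitalNonAssocSemiring R] (hN : N.HasDiagonalBlocks A)
    (v : ι × κ → R) (i : ι) (j : κ) :
    (N *ᵥ v) (i, j) = (A i *ᵥ fun j' => v (i, j')) j := by
  simp only [mulVec, dotProduct, hN i j, ite_mul, zero_mul, Fintype.sum_prod_type,
    Finset.sum_ite_irrel, Finset.sum_const_zero, Finset.sum_ite_eq, Finset.mem_univ, if_true]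

theorem dotProduct_mulVec [NonUnitalNonAssocSemiring R] (hN : N.HasDiagonalBlocks A)
    (w v : ι × κ → R) :
    w ⬝ᵥ (N *ᵥ v) = ∑ i, (fun j => w (i, j)) ⬝ᵥ (A i *ᵥ fun j => v (i, j)) := by
  simp only [dotProduct_prod_eq_sum, hN.mulVec_apply]

theorem posDef [Ring R] [PartialOrder R] [StarRing R] [StarOrderedRing R]
    (hN : N.HasDiagonalBlocks A) (hA : ∀ i, (A i).PosDef) :
    N.PosDef := by
  refine PosDef.of_dotProduct_mulVec_pos ?_ fun v hv => ?_
  · ext ⟨i, j⟩ ⟨i', j'⟩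
    by_cases h : i = i'
    · subst h
      simp [hN i j, hN i j', ← (hA i).isHermitian.apply j j']
    · simp [hN i j, hN i' j', h, Ne.symm h]
  · obtain ⟨⟨i₀, j₀⟩, hv₀⟩ := Function.ne_iff.mp hv
    have hblock : (fun j => v (i₀, j)) ≠ 0 := fun h => hv₀ (congrFun h j₀)
    rw [hN.dotProduct_mulVec]
    refine Finset.sum_pos' (fun i _ => ?_) ⟨i₀, Finset.mem_univ _, ?_⟩
    · exact (hA i).posSemidef.dotProduct_mulVec_nonneg fun j => v (i, j)
    · exact (hA i₀).dotProduct_mulVec_pos hblock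

theorem exists_mulVec_eq_uncurry [Field R] [DecidableEq κ] {c : ι → R} (hc : ∀ i, c i ≠ 0)
    (hN : N.HasDiagonalBlocks fun i => (c i)⁻¹ • A i) (hA : ∀ i, IsUnit (A i).det)
    (r : ι → κ → R) :
    ∃ u, N *ᵥ u = Function.uncurry r ∧
      u ⬝ᵥ (N *ᵥ u) = ∑ i, c i * (r i ⬝ᵥ ((A i)⁻¹ *ᵥ r i)) := by
  set u : ι × κ → R := fun p => c p.1 * ((A p.1)⁻¹ *ᵥ r p.1) p.2
  have hNu : N *ᵥ u = Function.uncurry r := by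
    ext ⟨i, j⟩
    have hu_block : (fun j' => u (i, j')) = c i • ((A i)⁻¹ *ᵥ r i) := rfl
    rw [hN.mulVec_apply, hu_block, smul_mulVec, mulVec_smul, smul_smul,
      inv_mul_cancel₀ (hc i), one_smul, mulVec_mulVec, mul_nonsing_inv _ (hA i), one_mulVec,
      Function.uncurry_apply_pair]
  refine ⟨u, hNu, ?_⟩
  rw [hNu, dotProduct_prod_eq_sum]
  refine Finset.sum_congr rfl fun i _ => ?_
  rw [dotProduct_comm (r i)]
  exact smul_dotProduct (c i) ((A i)⁻¹ *ᵥ r i) (r i)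

end HasDiagonalBlocks

end Matrix

open Matrix

/-- Lemma 5 of the paper: the intersection of the elliptical cylinders
`C(y_i, M_i, C_i) = {x : (C_i x − y_i)ᵀ M_i⁻¹ (C_i x − y_i) ≤ 1}` is contained in the
ellipsoid `E(C̄†ȳ, C̄†M̄C̄†ᵀ)`, where `C̄` and `ȳ` are the vertical stackings, `M̄` is
block diagonal with blocks `(1/μ_i)·M_i` (with `Σ μ_i = 1`), `rank(C̄) = n`,
and `C̄† = (C̄ᵀC̄)⁻¹C̄ᵀ`. -/
theorem cylinder_intersection_in_ellipsoid {q m n : ℕ}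
    (C : Fin q → Matrix (Fin m) (Fin n) ℝ)
    (y : Fin q → Fin m → ℝ)
    (M : Fin q → Matrix (Fin m) (Fin m) ℝ)
    (hM : ∀ i, (M i).PosDef)
    (μ : Fin q → ℝ) (hμpos : ∀ i, 0 < μ i) (hμsum : ∑ i, μ i = 1)
    (Cbar : Matrix (Fin q × Fin m) (Fin n) ℝ)
    (hCbar : ∀ i j k, Cbar (i, j) k = C i j k)
    (ybar : Fin q × Fin m → ℝ)
    (hybar : ∀ i j, ybar (i, j) = y i j)
    (Mbar : Matrix (Fin q × Fin m) (Fin q × Fin m) ℝ)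
    (hMbar : ∀ i j i' j', Mbar (i, j) (i', j') =
      if i = i' then (1 / μ i) * M i j j' else 0)
    (hrank : Cbar.rank = n)
    (x : Fin n → ℝ)
    (hx : ∀ i, (C i *ᵥ x - y i) ⬝ᵥ ((M i)⁻¹ *ᵥ (C i *ᵥ x - y i)) ≤ 1) :
    let Cdag : Matrix (Fin n) (Fin q × Fin m) ℝ := (Cbarᵀ * Cbar)⁻¹ * Cbarᵀ
    (x - Cdag *ᵥ ybar) ⬝ᵥ ((Cdag * Mbar * Cdagᵀ)⁻¹ *ᵥ (x - Cdag *ᵥ ybar)) ≤ 1 := by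
  intro Cdag
  have hCdag : Cdag * Cbar = 1 := inv_transpose_mul_self_mul_transpose_mul_self
    (Cbar.mulVec_injective_of_rank_eq_card (by rw [hrank, Fintype.card_fin]))
  have hblocks : Mbar.HasDiagonalBlocks fun i => (μ i)⁻¹ • M i := by
    intro i j i' j'
    simp [hMbar]
  have hMbarPD : Mbar.PosDef := hblocks.posDef fun i => (hM i).smul (by simpa using hμpos i)
  set r : Fin q → Fin m → ℝ := fun i => C i *ᵥ x - y i
  have hresidual : Cbar *ᵥ x - ybar = Function.uncurry r := by
    ext ⟨i, j⟩
    simp [r, mulVec, dotProduct, hCbar, hybar]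
  obtain ⟨u, hMbar_u, hquad⟩ := hblocks.exists_mulVec_eq_uncurry (fun i => (hμpos i).ne')
    (fun i => (isUnit_iff_isUnit_det _).mp (hM i).isUnit) r
  have hu : u ⬝ᵥ (Mbar *ᵥ u) ≤ 1 := calc
    u ⬝ᵥ (Mbar *ᵥ u) = ∑ i, μ i * (r i ⬝ᵥ ((M i)⁻¹ *ᵥ r i)) := hquad
    _ ≤ ∑ i, μ i * 1 := by
      gcongr with i
      · exact (hμpos i).le
      · exact hx i
    _ = 1 := by simp [hμsum]
  have hP : IsUnit (Cdag * Mbar * Cdagᵀ).det :=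
    (isUnit_iff_isUnit_det _).mp (hMbarPD.mul_mul_transpose_of_mul_eq_one hCdag).isUnit
  have hcenter : x - Cdag *ᵥ ybar = Cdag *ᵥ (Mbar *ᵥ u) := by
    rw [hMbar_u, ← hresidual, mulVec_sub, mulVec_mulVec, hCdag, one_mulVec]
  rw [hcenter]
  exact (dotProduct_inv_mul_mul_transpose_mulVec_le hMbarPD.posSemidef Cdag hP u).trans hu
end

section
/- Let Q̄ ∈ ℝ^{2m×2m} be symmetric and let F̄ = [Ḡ H̄] ∈ ℝ^{2m×n} be block-column partitioned with Ḡ ∈ ℝ^{2m×n_y} (the first n_y columns). Assume the symmetric matrix F̄ᵀQ̄F̄ has a negative smallest eigenvalue, λ_min(F̄ᵀQ̄F̄) < 0, and set L := max(1, |λ_min(F̄ᵀQ̄F̄)|^{−1/2}). Then for every x = (y, x̄) ∈ ℝ^{n_y} × ℝ^{n−n_y}, every v ∈ ℝ^{n_y}, and every ε ∈ ℝ satisfying (F̄x + Ḡv)ᵀ Q̄ (F̄x + Ḡv) ≤ ε², there exists x'' ∈ ℝ^n such that (x − x'')ᵀ F̄ᵀ Q̄ F̄ (x − x'') ≤ 0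 and ‖x''‖² ≤ 2L²(‖v‖² + ε²). -/
/-!
The matrix `M = F̄ᵀQ̄F̄` has a real eigenvalue `λ = λ_min(M) < 0`; let `u` be a unit eigenvector,
so `uᵀMu = λ`. Moving `v` into the state, `z = x + (v, 0)` satisfies `zᵀMz ≤ ε²`. Along the line
`z - s u` the quadratic form is `zᵀMz - s(uᵀMz + zᵀMu) + s²λ`; taking `s² = ε²/|λ|` with the sign
that makes the middle term nonpositive gives a point of the cone. Then `x'' = s u - (v, 0)` has
`‖x''‖² ≤ 2(‖v‖² + ε²/|λ|) ≤ 2L²(‖v‖² + ε²)`.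
-/

open Matrix

/-- The smallest (real) eigenvalue of a real square matrix, as the infimum of its
real spectrum (for symmetric matrices this is the smallest eigenvalue). -/
noncomputable def lmin {ι : Type*} [Fintype ι] [DecidableEq ι]
    (A : Matrix ι ι ℝ) : ℝ :=
  sInf (spectrum ℝ A)

theorem lmin_mem_spectrum {ι : Type*} [Fintype ι] [DecidableEq ι] {A : Matrix ι ι ℝ}
    (h : lmin A ≠ 0) : lmin A ∈ spectrum ℝ A := by
  refine Set.Nonempty.csInf_mem ?_ A.finite_real_spectrum
  by_contra hempty
  rw [Set.not_nonempty_iff_eq_empty] at hempty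
  exact h (by rw [lmin, hempty, Real.sInf_empty])

theorem Matrix.exists_unit_eigenvector_of_mem_spectrum {ι : Type*} [Fintype ι] [DecidableEq ι]
    {A : Matrix ι ι ℝ} {μ : ℝ} (h : μ ∈ spectrum ℝ A) :
    ∃ u : ι → ℝ, u ⬝ᵥ u = 1 ∧ A *ᵥ u = μ • u := by
  rw [← spectrum_toLin', ← Module.End.hasEigenvalue_iff_mem_spectrum] at h
  obtain ⟨w, hw⟩ := h.exists_hasEigenvector
  have hpos : 0 < w ⬝ᵥ w := by simpa using dotProduct_self_star_pos_iff.2 hw.2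
  refine ⟨(√(w ⬝ᵥ w))⁻¹ • w, ?_, ?_⟩
  · rw [smul_dotProduct, dotProduct_smul, smul_eq_mul, smul_eq_mul, ← mul_assoc, ← sq, inv_pow,
      Real.sq_sqrt hpos.le, inv_mul_cancel₀ hpos.ne']
  · rw [mulVec_smul, ← toLin'_apply, hw.apply_eq_smul, smul_comm]

theorem Matrix.dotProduct_mulVec_sub_smul {ι : Type*} [Fintype ι] (M : Matrix ι ι ℝ)
    (z u : ι → ℝ) (s : ℝ) :
    (z - s • u) ⬝ᵥ (M *ᵥ (z - s • u)) =
      z ⬝ᵥ (M *ᵥ z) - s * (u ⬝ᵥ (M *ᵥ z) + z ⬝ᵥ (M *ᵥ u)) + s ^ 2 * u ⬝ᵥ (M *ᵥ u) := by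
  simp only [mulVec_sub, mulVec_smul, sub_dotProduct, dotProduct_sub, dotProduct_smul,
    smul_dotProduct, smul_eq_mul]
  ring

theorem Matrix.exists_dotProduct_mulVec_sub_smul_nonpos {ι : Type*} [Fintype ι]
    (M : Matrix ι ι ℝ) {z u : ι → ℝ} {ε : ℝ} (hz : z ⬝ᵥ (M *ᵥ z) ≤ ε ^ 2)
    (hu : u ⬝ᵥ (M *ᵥ u) < 0) :
    ∃ s : ℝ, s ^ 2 = ε ^ 2 / -(u ⬝ᵥ (M *ᵥ u)) ∧ (z - s • u) ⬝ᵥ (M *ᵥ (z - s • u)) ≤ 0 := by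
  have hε : 0 ≤ ε ^ 2 / -(u ⬝ᵥ (M *ᵥ u)) := div_nonneg (sq_nonneg ε) (neg_nonneg.2 hu.le)
  set c := u ⬝ᵥ (M *ᵥ z) + z ⬝ᵥ (M *ᵥ u)
  obtain ⟨s, hs, hsc⟩ : ∃ s : ℝ, s ^ 2 = ε ^ 2 / -(u ⬝ᵥ (M *ᵥ u)) ∧ 0 ≤ s * c := by
    rcases le_total 0 c with hc | hc
    · exact ⟨√_, Real.sq_sqrt hε, mul_nonneg (Real.sqrt_nonneg _) hc⟩
    · exact ⟨-√_, by rw [neg_sq, Real.sq_sqrt hε],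
        mul_nonneg_of_nonpos_of_nonpos (neg_nonpos.2 (Real.sqrt_nonneg _)) hc⟩
  refine ⟨s, hs, ?_⟩
  have hsu : s ^ 2 * u ⬝ᵥ (M *ᵥ u) = -ε ^ 2 := by
    rw [hs, div_neg, neg_mul, div_mul_cancel₀ _ hu.ne]
  rw [dotProduct_mulVec_sub_smul, hsu]
  linarith

theorem Matrix.sub_dotProduct_sub_le {ι : Type*} [Fintype ι] (a b : ι → ℝ) :
    (a - b) ⬝ᵥ (a - b) ≤ 2 * (a ⬝ᵥ a + b ⬝ᵥ b) := by
  have h : 0 ≤ (a + b) ⬝ᵥ (a + b) := Finset.sum_nonneg fun i _ => mul_self_nonneg _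
  simp only [add_dotProduct, dotProduct_add, sub_dotProduct, dotProduct_sub] at h ⊢
  linarith [dotProduct_comm a b]

theorem Matrix.dotProduct_transpose_mul_mul_mulVec {ι κ : Type*} [Fintype ι] [Fintype κ]
    (Q : Matrix κ κ ℝ) (F : Matrix κ ι ℝ) (z : ι → ℝ) :
    z ⬝ᵥ ((Fᵀ * Q * F) *ᵥ z) = (F *ᵥ z) ⬝ᵥ (Q *ᵥ (F *ᵥ z)) := by
  rw [← mulVec_mulVec, ← mulVec_mulVec, dotProduct_mulVec, vecMul_transpose]

theorem Matrix.submatrix_id_inl_mulVec {ι κ ν : Type*} [Fintype κ] [Fintype ν]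
    (A : Matrix ι (κ ⊕ ν) ℝ) (v : κ → ℝ) :
    A.submatrix id Sum.inl *ᵥ v = A *ᵥ Sum.elim v 0 := by
  ext i
  simp [mulVec, dotProduct, Fintype.sum_sum_type]

theorem add_div_abs_le_sq_max_one_inv_sqrt_abs_mul {a b c : ℝ} (hb : 0 ≤ b) (hc : 0 ≤ c) :
    b + c / |a| ≤ max 1 (√|a|)⁻¹ ^ 2 * (b + c) := by
  have h1 : 1 ≤ max 1 (√|a|)⁻¹ ^ 2 := one_le_pow₀ (le_max_left _ _)
  have h2 : |a|⁻¹ ≤ max 1 (√|a|)⁻¹ ^ 2 :=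
    calc |a|⁻¹ = (√|a|)⁻¹ ^ 2 := by rw [inv_pow, Real.sq_sqrt (abs_nonneg a)]
      _ ≤ max 1 (√|a|)⁻¹ ^ 2 := pow_le_pow_left₀ (by positivity) (le_max_right _ _) 2
  rw [div_eq_mul_inv]
  nlinarith [mul_le_mul_of_nonneg_left h2 hc, mul_le_mul_of_nonneg_left h1 hb]

theorem jump_set_D2_perturbation_general {m ny k : ℕ}
    (Qb : Matrix (Fin (2 * m)) (Fin (2 * m)) ℝ)
    (Fb : Matrix (Fin (2 * m)) (Fin ny ⊕ Fin k) ℝ)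
    (hneg : lmin (Fbᵀ * Qb * Fb) < 0)
    (y : Fin ny → ℝ) (xb : Fin k → ℝ) (v : Fin ny → ℝ) (ε : ℝ)
    (hD2 : let Gb : Matrix (Fin (2 * m)) (Fin ny) ℝ := Fb.submatrix id Sum.inl
           let x : Fin ny ⊕ Fin k → ℝ := Sum.elim y xb
           (Fb *ᵥ x + Gb *ᵥ v) ⬝ᵥ (Qb *ᵥ (Fb *ᵥ x + Gb *ᵥ v)) ≤ ε ^ 2) :
    let x : Fin ny ⊕ Fin k → ℝ := Sum.elim y xb
    let L : ℝ := max 1 (Real.sqrt |lmin (Fbᵀ * Qb * Fb)|)⁻¹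
    ∃ x'' : Fin ny ⊕ Fin k → ℝ,
      (x - x'') ⬝ᵥ ((Fbᵀ * Qb * Fb) *ᵥ (x - x'')) ≤ 0 ∧
        x'' ⬝ᵥ x'' ≤ 2 * L ^ 2 * (v ⬝ᵥ v + ε ^ 2) := by
  intro x L
  set M := Fbᵀ * Qb * Fb
  set v' : Fin ny ⊕ Fin k → ℝ := Sum.elim v 0
  have hz : (x + v') ⬝ᵥ (M *ᵥ (x + v')) ≤ ε ^ 2 := by
    rwa [dotProduct_transpose_mul_mul_mulVec, mulVec_add, ← submatrix_id_inl_mulVec]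
  obtain ⟨u, hu1, hu⟩ := exists_unit_eigenvector_of_mem_spectrum (lmin_mem_spectrum hneg.ne)
  have hqu : u ⬝ᵥ (M *ᵥ u) = lmin M := by rw [hu, dotProduct_smul, hu1, smul_eq_mul, mul_one]
  obtain ⟨s, hs, hcone⟩ := M.exists_dotProduct_mulVec_sub_smul_nonpos hz (hqu ▸ hneg)
  rw [hqu, ← abs_of_neg hneg] at hs
  refine ⟨s • u - v', by rwa [show x - (s • u - v') = x + v' - s • u by abel], ?_⟩
  calc (s • u - v') ⬝ᵥ (s • u - v') ≤ 2 * ((s • u) ⬝ᵥ (s • u) + v' ⬝ᵥ v') :=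
        sub_dotProduct_sub_le _ _
    _ = 2 * (v ⬝ᵥ v + ε ^ 2 / |lmin M|) := by
      rw [smul_dotProduct, dotProduct_smul, hu1, sumElim_dotProduct_sumElim, dotProduct_zero]
      simp only [smul_eq_mul]
      rw [← hs]
      ring
    _ ≤ 2 * L ^ 2 * (v ⬝ᵥ v + ε ^ 2) := by
      rw [mul_assoc]
      gcongr
      exact add_div_abs_le_sq_max_one_inv_sqrt_abs_mul
        (Finset.sum_nonneg fun i _ => mul_self_nonneg (v i)) (sq_nonneg ε)

/-- Jump-set perturbation bound for `D₂` (proof of Lemma 1 of the paper, case `i = 2`,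
`L_D = √2·L`): if `λ_min(F̄ᵀQ̄F̄) < 0` and `(F̄x + Ḡv)ᵀ Q̄ (F̄x + Ḡv) ≤ ε²`, then there is
`x''` with `(x − x'')ᵀ F̄ᵀ Q̄ F̄ (x − x'') ≤ 0` and `‖x''‖² ≤ 2L²(‖v‖² + ε²)`,
where `L = max(1, |λ_min(F̄ᵀQ̄F̄)|^{-1/2})`. -/
theorem jump_set_D2_perturbation {m ny k : ℕ}
    (Qb : Matrix (Fin (2 * m)) (Fin (2 * m)) ℝ) (hQb : Qb.IsSymm)
    (Fb : Matrix (Fin (2 * m)) (Fin ny ⊕ Fin k) ℝ)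
    (hneg : lmin (Fbᵀ * Qb * Fb) < 0)
    (y : Fin ny → ℝ) (xb : Fin k → ℝ) (v : Fin ny → ℝ) (ε : ℝ)
    (hD2 : let Gb : Matrix (Fin (2 * m)) (Fin ny) ℝ := Fb.submatrix id Sum.inl
           let x : Fin ny ⊕ Fin k → ℝ := Sum.elim y xb
           (Fb *ᵥ x + Gb *ᵥ v) ⬝ᵥ (Qb *ᵥ (Fb *ᵥ x + Gb *ᵥ v)) ≤ ε ^ 2) :
    let x : Fin ny ⊕ Fin k → ℝ := Sum.elim y xb
    let L : ℝ := max 1 (Real.sqrt |lmin (Fbᵀ * Qb * Fb)|)⁻¹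
    ∃ x'' : Fin ny ⊕ Fin k → ℝ,
      (x - x'') ⬝ᵥ ((Fbᵀ * Qb * Fb) *ᵥ (x - x'')) ≤ 0 ∧
        x'' ⬝ᵥ x'' ≤ 2 * L ^ 2 * (v ⬝ᵥ v + ε ^ 2) :=
  jump_set_D2_perturbation_general Qb Fb hneg y xb v ε hD2
end

section
/- Let Φ ∈ ℝ^{n×n} be invertible, Γ ∈ ℝ^{n×n_u}, C ∈ ℝ^{n_y×n}, and V ∈ ℝ^{n_y×n_y} symmetric positive definite. Let k, k̄ ∈ ℕ with k ≤ k̄, let ξ_k, ξ_{k̄} ∈ ℝ^n, let u_j ∈ ℝ^{n_u} for j = k, …, k̄−1, let D ⊆ ℝ^n be a set, δ ∈ D, and ν ∈ ℝ^{n_y} with νᵀV⁻¹ν ≤ 1. Suppose ξ_{k̄} = Φ^{k̄−k} ξ_k + Σ_{j=k}^{k̄−1} Φ^{k̄−1−j} Γ u_j + δ and y = C ξ_k + ν. Then C Φ^{−(k̄−k)} ξ_{k̄} ∈ E(ỹ, V) + C Φ^{−(k̄−k)} D (a Minkowski sum of sets), where ỹ := y + C Σ_{j=k}^{k̄−1}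 Φ^{−(k̄−k)} Φ^{k̄−1−j} Γ u_j. -/
open Matrix Pointwise

/-- Lemma 6 of the paper: a past noisy output measurement of the discrete-time recursion
constrains the current state: `C Φ^{−(k̄−k)} ξ_{k̄}` lies in the Minkowski sum of the
noise ellipsoid `E(ỹ, V)` centered at the input-corrected prediction `ỹ` and the
back-propagated disturbance set `C Φ^{−(k̄−k)} D`. -/
theorem past_measurement_constraint {n nu ny : ℕ}
    (Φ : Matrix (Fin n) (Fin n) ℝ) (hΦ : IsUnit Φ.det)
    (Γ : Matrix (Fin n) (Fin nu) ℝ)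
    (C : Matrix (Fin ny) (Fin n) ℝ)
    (V : Matrix (Fin ny) (Fin ny) ℝ) (hV : V.PosDef)
    (k kbar : ℕ) (hk : k ≤ kbar)
    (ξk ξkbar : Fin n → ℝ)
    (u : ℕ → Fin nu → ℝ)
    (D : Set (Fin n → ℝ)) (δ : Fin n → ℝ) (hδ : δ ∈ D)
    (ν : Fin ny → ℝ) (hν : ν ⬝ᵥ (V⁻¹ *ᵥ ν) ≤ 1)
    (y : Fin ny → ℝ)
    (hdyn : ξkbar =
      Φ ^ (kbar - k) *ᵥ ξk +
        (∑ j ∈ Finset.Ico k kbar, Φ ^ (kbar - 1 - j) *ᵥ (Γ *ᵥ u j)) + δ)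
    (hy : y = C *ᵥ ξk + ν) :
    let ytil : Fin ny → ℝ :=
      y + C *ᵥ ∑ j ∈ Finset.Ico k kbar,
        ((Φ⁻¹) ^ (kbar - k) * Φ ^ (kbar - 1 - j)) *ᵥ (Γ *ᵥ u j)
    C *ᵥ ((Φ⁻¹) ^ (kbar - k) *ᵥ ξkbar) ∈
      {w : Fin ny → ℝ | (w - ytil) ⬝ᵥ (V⁻¹ *ᵥ (w - ytil)) ≤ 1} +
        (fun d => C *ᵥ ((Φ⁻¹) ^ (kbar - k) *ᵥ d)) '' D := by
  intro ytil
  have hinv : (Φ⁻¹) ^ (kbar - k) * Φ ^ (kbar - k) = 1 := by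
    rw [Matrix.inv_pow']
    exact Matrix.nonsing_inv_mul _ (by simpa [Matrix.det_pow] using hΦ.pow (kbar - k))
  have h1 : ytil - ν ∈ {w : Fin ny → ℝ | (w - ytil) ⬝ᵥ (V⁻¹ *ᵥ (w - ytil)) ≤ 1} := by
    simpa [Matrix.mulVec_neg, dotProduct_neg, neg_dotProduct] using hν
  have key : C *ᵥ ((Φ⁻¹) ^ (kbar - k) *ᵥ ξkbar)
      = (ytil - ν) + C *ᵥ ((Φ⁻¹) ^ (kbar - k) *ᵥ δ) := by
    have hξ : (Φ⁻¹) ^ (kbar - k) *ᵥ (Φ ^ (kbar - k) *ᵥ ξk) = ξk := by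
      rw [Matrix.mulVec_mulVec, hinv, Matrix.one_mulVec]
    have hsum : ∀ (A : Matrix (Fin ny) (Fin n) ℝ) (v : ℕ → Fin n → ℝ),
        A *ᵥ (∑ j ∈ Finset.Ico k kbar, v j) = ∑ j ∈ Finset.Ico k kbar, A *ᵥ v j :=
      fun A v => map_sum (Matrix.mulVecLin A) _ _
    simp only [ytil, hdyn, hy, Matrix.mulVec_add, hsum,
      Matrix.mulVec_mulVec, hξ]
    simp only [Matrix.mul_assoc]
    abel
  rw [key]
  exact Set.add_mem_add h1 ⟨δ, hδ, rfl⟩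
end
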